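/- arXiv:2401.00752 — 2 statements merged into one kernel-verified Lean document; each statement's English description precedes it below -/
import Mathlib

section
/- For every real α > -1, every real z > 0 and every integer n ≥ 1, the modified moment satisfies m_n(α,z) = (−1)^n · (n! / (((α+n+1)_n)^2 · (α+2n+1))) · z^n e^{−z} · ∑_{k=0}^{∞} ((n+1)_k / (α+2n+2)_k) · z^k/k!, where the infinite series converges. -/
open Real MeasureTheory Finset Filter

/-- Generalized binomial coefficient via the Gamma function:
`C(r,k) = Γ(r+1)/(Γ(k+1)Γ(r-k+1))`. -/
noncomputable def gbinom (r k : ℝ) : ℝ :=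
  Real.Gamma (r + 1) / (Real.Gamma (k + 1) * Real.Gamma (r - k + 1))

/-- The monic Jacobi polynomial of parameters `(α, β)` and degree `n`. -/
noncomputable def jacobiP (α β : ℝ) (n : ℕ) (x : ℝ) : ℝ :=
  (1 / gbinom (2 * n + α + β) n) *
    ∑ k ∈ Finset.range (n + 1),
      gbinom (n + α) ((n - k : ℕ) : ℝ) * gbinom (n + β) (k : ℝ) *
        (x - 1) ^ k * (x + 1) ^ (n - k)

/-- The Pochhammer symbol `(a)_k = a (a+1) ⋯ (a+k-1)`. -/
def poch (a : ℝ) (k : ℕ) : ℝ := ∏ i ∈ Finset.range k, (a + i)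

/-- The lower incomplete gamma function `γ̂(a,z) = ∫₀^z t^(a-1) e^(-t) dt`. -/
noncomputable def lowerGamma (a z : ℝ) : ℝ :=
  ∫ t in (0:ℝ)..z, t ^ (a - 1) * Real.exp (-t)

/-- The monic shifted Jacobi polynomial of parameters `(0, α)` on `[0,1]`. -/
noncomputable def shiftedJacobiP (α : ℝ) (n : ℕ) (x : ℝ) : ℝ :=
  (1 / 2 ^ n) * jacobiP 0 α n (2 * x - 1)

/-- The modified moments of the weight `x^α e^(-z x)` on `(0,1)` with respect to
the monic shifted Jacobi polynomials. -/
noncomputable def modMoment (α z : ℝ) (n : ℕ) : ℝ :=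
  ∫ x in (0:ℝ)..1, shiftedJacobiP α n x * x ^ α * Real.exp (-z * x)



lemma poch_succ (a : ℝ) (k : ℕ) : poch a (k+1) = poch a k * (a + k) := by
  simp [poch, Finset.prod_range_succ]

lemma poch_pos {a : ℝ} (ha : 0 < a) (k : ℕ) : 0 < poch a k := by
  refine Finset.prod_pos fun i _ => by positivity

lemma Gamma_poch {a : ℝ} (ha : 0 < a) (k : ℕ) :
    Real.Gamma (a + k) = poch a k * Real.Gamma a := by
  induction k with
  | zero => simp [poch]
  | succ k ih =>
    have h : a + (k+1 : ℕ) = (a + k) + 1 := by push_cast; ring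
    rw [h, Real.Gamma_add_one (by positivity), ih, poch_succ]; ring

lemma poch_le {a b : ℝ} (h0 : 0 < a) (h : a ≤ b) (k : ℕ) : poch a k ≤ poch b k := by
  refine Finset.prod_le_prod (fun i _ => by positivity) (fun i _ => by linarith)

lemma summable_hyp {a b z : ℝ} (h0 : 0 < a) (hab : a ≤ b) (hz : 0 ≤ z) :
    Summable (fun k : ℕ => poch a k / poch b k * z ^ k / (Nat.factorial k : ℝ)) := by
  have hb : 0 < b := lt_of_lt_of_le h0 hab
  refine Summable.of_nonneg_of_le (fun k => ?_) (fun k => ?_)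
    (Real.summable_pow_div_factorial z)
  · have := poch_pos h0 k; have := poch_pos hb k; positivity
  · have h1 : poch a k / poch b k ≤ 1 := by
      rw [div_le_one (poch_pos hb k)]; exact poch_le h0 hab k
    have h2 : (0:ℝ) ≤ z ^ k / (Nat.factorial k : ℝ) := by positivity
    calc poch a k / poch b k * z ^ k / (Nat.factorial k : ℝ)
        = (poch a k / poch b k) * (z ^ k / (Nat.factorial k : ℝ)) := by ring
      _ ≤ 1 * (z ^ k / (Nat.factorial k : ℝ)) := by gcongr
      _ = z ^ k / (Nat.factorial k : ℝ) := one_mul _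


lemma altsum_succ (n : ℕ) (f : ℕ → ℝ) :
    ∑ k ∈ range (n+2), (-1:ℝ)^k * ((n+1).choose k) * f k
    = ∑ k ∈ range (n+1), (-1:ℝ)^k * (n.choose k) * f k
      - ∑ k ∈ range (n+1), (-1:ℝ)^k * (n.choose k) * f (k+1) := by
  have h1 : ∑ k ∈ range (n+2), (-1:ℝ)^k * ((n+1).choose k) * f k
      = f 0 + ∑ k ∈ range (n+1), (-1:ℝ)^(k+1) * ((n+1).choose (k+1)) * f (k+1) := by
    rw [Finset.sum_range_succ' _ (n+1)]; simp [add_comm]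
  have h2 : ∀ k, ((n+1).choose (k+1) : ℝ) = n.choose k + n.choose (k+1) := by
    intro k; rw [Nat.choose_succ_succ]; push_cast; ring
  have h3 : ∑ k ∈ range (n+1), (-1:ℝ)^k * (n.choose k) * f k
      = f 0 + ∑ k ∈ range n, (-1:ℝ)^(k+1) * (n.choose (k+1)) * f (k+1) := by
    rw [Finset.sum_range_succ' _ n]; simp [add_comm]
  have h4 : ∑ k ∈ range (n+1), (-1:ℝ)^(k+1) * (n.choose (k+1)) * f (k+1)
      = ∑ k ∈ range n, (-1:ℝ)^(k+1) * (n.choose (k+1)) * f (k+1) := by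
    rw [Finset.sum_range_succ]; simp
  rw [h1, h3]
  conv_lhs => rw [Finset.sum_congr rfl (fun k _ => by rw [h2 k])]
  have : ∑ k ∈ range (n+1), (-1:ℝ)^(k+1) * ((n.choose k : ℝ) + n.choose (k+1)) * f (k+1)
      = ∑ k ∈ range (n+1), (-1:ℝ)^(k+1) * (n.choose k) * f (k+1)
        + ∑ k ∈ range (n+1), (-1:ℝ)^(k+1) * (n.choose (k+1)) * f (k+1) := by
    rw [← Finset.sum_add_distrib]; congr 1; ext k; ring
  rw [this, h4]
  have h5 : ∑ k ∈ range (n+1), (-1:ℝ)^(k+1) * (n.choose k) * f (k+1)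
      = - ∑ k ∈ range (n+1), (-1:ℝ)^k * (n.choose k) * f (k+1) := by
    rw [← Finset.sum_neg_distrib]; congr 1; ext k; ring
  rw [h5]; ring

lemma keyid (n : ℕ) : ∀ m s : ℕ,
    ∑ k ∈ range (n+1), (-1:ℝ)^k * (n.choose k) * ∏ i ∈ range m, ((k:ℝ)+s+i)
    = (-1)^n * (m.descFactorial n) * ∏ i ∈ range (m-n), ((s:ℝ)+n+i) := by
  induction n with
  | zero => intro m s; simp
  | succ n ih =>
    intro m s
    rw [altsum_succ n (fun k => ∏ i ∈ range m, ((k:ℝ)+s+i))]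
    match m with
    | 0 => simp
    | m+1 =>
      have hdiff : ∀ k : ℕ, ∏ i ∈ range (m+1), (((k+1:ℕ):ℝ)+s+i) - ∏ i ∈ range (m+1), ((k:ℝ)+s+i)
          = (m+1 : ℝ) * ∏ i ∈ range m, ((k:ℝ)+(s+1:ℕ)+i) := by
        intro k
        have e1 : ∏ i ∈ range (m+1), (((k+1:ℕ):ℝ)+s+i)
            = (∏ i ∈ range m, ((k:ℝ)+(s+1:ℕ)+i)) * ((k:ℝ)+(s+1:ℕ)+m) := by
          rw [Finset.prod_range_succ]
          congr 1
          · apply Finset.prod_congr rfl; intro i _; push_cast; ring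
          · push_cast; ring
        have e2 : ∏ i ∈ range (m+1), ((k:ℝ)+s+i)
            = (∏ i ∈ range m, ((k:ℝ)+(s+1:ℕ)+i)) * ((k:ℝ)+s) := by
          rw [Finset.prod_range_succ' (fun i => (k:ℝ)+s+i) m]
          congr 1
          · apply Finset.prod_congr rfl; intro i _; push_cast; ring
          · push_cast; ring
        rw [e1, e2]; push_cast; ring
      have : ∑ k ∈ range (n+1), (-1:ℝ)^k * (n.choose k) * ∏ i ∈ range (m+1), ((k:ℝ)+s+i)
          - ∑ k ∈ range (n+1), (-1:ℝ)^k * (n.choose k) * ∏ i ∈ range (m+1), (((k+1:ℕ):ℝ)+s+i)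
          = -(m+1:ℝ) * ∑ k ∈ range (n+1), (-1:ℝ)^k * (n.choose k) * ∏ i ∈ range m, ((k:ℝ)+(s+1:ℕ)+i) := by
        rw [Finset.mul_sum, ← Finset.sum_sub_distrib]
        apply Finset.sum_congr rfl; intro k _
        linear_combination (-(-1:ℝ)^k * (n.choose k)) * hdiff k
      have hcast : ∀ k:ℕ, ((k:ℝ)+1) = (((k+1:ℕ):ℝ)) := by intro k; push_cast; ring
      calc _ = ∑ k ∈ range (n+1), (-1:ℝ)^k * (n.choose k) * ∏ i ∈ range (m+1), ((k:ℝ)+s+i)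
          - ∑ k ∈ range (n+1), (-1:ℝ)^k * (n.choose k) * ∏ i ∈ range (m+1), (((k+1:ℕ):ℝ)+s+i) := by
            congr 1
        _ = -(m+1:ℝ) * ∑ k ∈ range (n+1), (-1:ℝ)^k * (n.choose k) * ∏ i ∈ range m, ((k:ℝ)+(s+1:ℕ)+i) := this
        _ = -(m+1:ℝ) * ((-1)^n * (m.descFactorial n) * ∏ i ∈ range (m-n), (((s+1:ℕ):ℝ)+n+i)) := by rw [ih m (s+1)]
        _ = _ := by
            rw [Nat.succ_descFactorial_succ]
            have : (m+1) - (n+1) = m - n := by omega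
            rw [this]
            have : ∏ i ∈ range (m-n), (((s+1:ℕ):ℝ)+n+i) = ∏ i ∈ range (m-n), ((s:ℝ)+(n+1:ℕ)+i) := by
              apply Finset.prod_congr rfl; intro i _; push_cast; ring
            rw [this]; push_cast; ring


lemma ii_one_sub_rpow {β : ℝ} (hβ : -1 < β) :
    IntervalIntegrable (fun t : ℝ => (1-t)^β) volume 0 1 := by
  have h := (intervalIntegral.intervalIntegrable_rpow' (r := β) (a := 0) (b := 1) hβ).comp_sub_left 1
  simpa using h.symm

lemma ii_mul_one_sub_rpow {β : ℝ} (hβ : -1 < β) {g : ℝ → ℝ}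
    (hg : ContinuousOn g (Set.uIcc 0 1)) :
    IntervalIntegrable (fun t : ℝ => g t * (1-t)^β) volume 0 1 :=
  (ii_one_sub_rpow hβ).continuousOn_mul hg

lemma ii_mul_rpow {α : ℝ} (hα : -1 < α) {g : ℝ → ℝ}
    (hg : ContinuousOn g (Set.uIcc 0 1)) :
    IntervalIntegrable (fun t : ℝ => g t * t^α) volume 0 1 :=
  (intervalIntegral.intervalIntegrable_rpow' hα).continuousOn_mul hg

lemma beta_nat {β : ℝ} (hβ : -1 < β) (N : ℕ) :
    (∫ t in (0:ℝ)..1, (t:ℝ)^N * (1-t)^β) = (N.factorial : ℝ) / poch (β+1) (N+1) := by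
  have hb : (0:ℝ) < β + 1 := by linarith
  have h1 : Complex.betaIntegral (β+1 : ℂ) ((N:ℂ)+1)
      = (N.factorial : ℂ) / ∏ j ∈ range (N+1), ((β:ℂ)+1+j) := by
    have := Complex.betaIntegral_eval_nat_add_one_right
      (u := (β:ℂ)+1) (by simpa using hb) N
    simpa using this
  have h2 : Complex.betaIntegral ((N:ℂ)+1) ((β:ℂ)+1) = Complex.betaIntegral ((β:ℂ)+1) ((N:ℂ)+1) :=
    Complex.betaIntegral_symm _ _
  have h3 : Complex.betaIntegral ((N:ℂ)+1) ((β:ℂ)+1)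
      = ((∫ t in (0:ℝ)..1, (t:ℝ)^N * (1-t)^β : ℝ) : ℂ) := by
    rw [Complex.betaIntegral, ← intervalIntegral.integral_ofReal]
    apply intervalIntegral.integral_congr
    intro x hx
    rw [Set.uIcc_of_le (by norm_num : (0:ℝ) ≤ 1)] at hx
    have hx0 : (0:ℝ) ≤ x := hx.1
    have hx1 : (0:ℝ) ≤ 1 - x := by linarith [hx.2]
    show (x:ℂ)^((N:ℂ)+1-1) * (1 - (x:ℂ))^((β:ℂ)+1-1) = ((x ^ N * (1-x)^β : ℝ) : ℂ)
    have e1 : ((N:ℂ)+1-1) = ((N:ℕ):ℂ) := by ring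
    have e2 : ((β:ℂ)+1-1) = ((β:ℝ):ℂ) := by ring
    rw [e1, e2, Complex.cpow_natCast]
    have e3 : (1 - (x:ℂ)) = (((1 - x : ℝ)):ℂ) := by push_cast; ring
    rw [e3, ← Complex.ofReal_cpow hx1]
    push_cast
    ring
  have h4 : ((N.factorial : ℂ) / ∏ j ∈ range (N+1), ((β:ℂ)+1+j))
      = (((N.factorial : ℝ) / poch (β+1) (N+1) : ℝ) : ℂ) := by
    have : ∏ j ∈ range (N+1), ((β:ℂ)+1+j) = ((poch (β+1) (N+1) : ℝ) : ℂ) := by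
      rw [poch]; push_cast; rfl
    rw [this]; push_cast; rfl
  have := h3.symm.trans (h2.trans (h1.trans h4))
  exact_mod_cast this


lemma exp_tsum (x : ℝ) : Real.exp x = ∑' m : ℕ, x^m / (m.factorial : ℝ) := by
  rw [Real.exp_eq_exp_ℝ, NormedSpace.exp_eq_tsum_div]

lemma series_expand {γ : ℝ} (hγ : -1 < γ) {z : ℝ} (hz : 0 < z) (N : ℕ) :
    (∫ t in (0:ℝ)..1, t^N * (1-t)^γ * Real.exp (z*t))
    = ∑' m : ℕ, z^m / (m.factorial : ℝ) * (((N+m).factorial : ℝ) / poch (γ+1) (N+m+1)) := by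
  set F : ℕ → ℝ → ℝ := fun m t => ((z*t)^m / (m.factorial : ℝ) * t^N) * (1-t)^γ with hF
  have hgc : ∀ m : ℕ, Continuous (fun t : ℝ => (z*t)^m / (m.factorial : ℝ) * t^N) := by
    intro m; fun_prop
  have hint : ∀ m : ℕ, IntervalIntegrable (F m) volume 0 1 := fun m =>
    ii_mul_one_sub_rpow hγ ((hgc m).continuousOn)
  have hle : (0:ℝ) ≤ 1 := by norm_num
  have hIoc : ∀ m : ℕ, IntegrableOn (F m) (Set.Ioc 0 1) volume := fun m =>
    (intervalIntegrable_iff_integrableOn_Ioc_of_le hle).mp (hint m)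
  have hval : ∀ m : ℕ, (∫ t in (0:ℝ)..1, F m t)
      = z^m / (m.factorial : ℝ) * (((N+m).factorial : ℝ) / poch (γ+1) ((N+m)+1)) := by
    intro m
    have : ∀ t : ℝ, F m t = z^m / (m.factorial : ℝ) * (t^(N+m) * (1-t)^γ) := by
      intro t
      simp only [hF, mul_pow, pow_add]
      ring
    rw [intervalIntegral.integral_congr (fun t _ => this t),
      intervalIntegral.integral_const_mul, beta_nat hγ (N+m)]
  set C : ℝ := ∫ t in (0:ℝ)..1, (1-t)^γ with hC
  have hnormle : ∀ m : ℕ, (∫ t in Set.Ioc (0:ℝ) 1, ‖F m t‖) ≤ z^m / (m.factorial : ℝ) * C := by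
    intro m
    have heq : ∀ t ∈ Set.Ioc (0:ℝ) 1, ‖F m t‖ = F m t := by
      intro t ht
      have h1 : (0:ℝ) ≤ t := le_of_lt ht.1
      have h2 : (0:ℝ) ≤ 1 - t := by linarith [ht.2]
      have : 0 ≤ F m t := by
        simp only [hF]
        have := Real.rpow_nonneg h2 γ
        positivity
      simp [Real.norm_eq_abs, abs_of_nonneg this]
    rw [MeasureTheory.setIntegral_congr_fun measurableSet_Ioc heq]
    have hCint : IntegrableOn (fun t : ℝ => z^m / (m.factorial : ℝ) * (1-t)^γ) (Set.Ioc 0 1) volume := by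
      refine (intervalIntegrable_iff_integrableOn_Ioc_of_le hle).mp ?_
      exact (ii_one_sub_rpow hγ).const_mul _
    have hmono := MeasureTheory.setIntegral_mono_on (hIoc m) hCint measurableSet_Ioc ?_
    · calc (∫ t in Set.Ioc (0:ℝ) 1, F m t) ≤ ∫ t in Set.Ioc (0:ℝ) 1, z^m / (m.factorial : ℝ) * (1-t)^γ := hmono
        _ = z^m / (m.factorial : ℝ) * C := by
          rw [MeasureTheory.integral_const_mul, hC, intervalIntegral.integral_of_le hle]
    · intro t ht
      simp only [hF]
      have h1 : 0 < t := ht.1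
      have h2 : (0:ℝ) ≤ 1 - t := by linarith [ht.2]
      have hr : (0:ℝ) ≤ (1-t)^γ := Real.rpow_nonneg h2 γ
      have hb1 : (z*t)^m ≤ z^m := by
        apply pow_le_pow_left₀ (by positivity)
        nlinarith [ht.2, hz]
      have hb2 : t^N ≤ 1 := pow_le_one₀ (le_of_lt h1) ht.2
      calc (z*t)^m / (m.factorial : ℝ) * t^N * (1-t)^γ
          = ((z*t)^m * t^N) / (m.factorial : ℝ) * (1-t)^γ := by ring
        _ ≤ (z^m * 1) / (m.factorial : ℝ) * (1-t)^γ := by gcongr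
        _ = z^m / (m.factorial : ℝ) * (1-t)^γ := by ring
  have hsum : Summable (fun m : ℕ => ∫ t in Set.Ioc (0:ℝ) 1, ‖F m t‖) := by
    refine Summable.of_nonneg_of_le
      (fun m => MeasureTheory.integral_nonneg (fun t => norm_nonneg _)) hnormle ?_
    simpa using (Real.summable_pow_div_factorial z).mul_right C
  have hswap := MeasureTheory.integral_tsum_of_summable_integral_norm
    (μ := volume.restrict (Set.Ioc (0:ℝ) 1)) (F := F) (fun m => hIoc m) hsum
  have hpt : ∀ t : ℝ, (∑' m : ℕ, F m t) = t^N * (1-t)^γ * Real.exp (z*t) := by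
    intro t
    have he : ∀ m : ℕ, F m t = (z*t)^m / (m.factorial : ℝ) * (t^N * (1-t)^γ) := fun m => by
      simp only [hF]; ring
    rw [tsum_congr he, tsum_mul_right, ← exp_tsum (z*t)]
    ring
  calc (∫ t in (0:ℝ)..1, t^N * (1-t)^γ * Real.exp (z*t))
      = ∫ t in Set.Ioc (0:ℝ) 1, ∑' m : ℕ, F m t := by
        rw [intervalIntegral.integral_of_le hle]
        exact MeasureTheory.setIntegral_congr_fun measurableSet_Ioc (fun t _ => (hpt t).symm)
    _ = ∑' m : ℕ, ∫ t in Set.Ioc (0:ℝ) 1, F m t := hswap.symm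
    _ = ∑' m : ℕ, z^m / (m.factorial : ℝ) * (((N+m).factorial : ℝ) / poch (γ+1) (N+m+1)) := by
        refine tsum_congr (fun m => ?_)
        rw [← intervalIntegral.integral_of_le hle, hval m]

lemma fact_ratio (k m : ℕ) :
    (((k+m).factorial : ℝ)) = (k.factorial : ℝ) * ∏ i ∈ range m, ((k:ℝ)+1+i) := by
  induction m with
  | zero => simp
  | succ m ih =>
    have : k + (m+1) = (k+m) + 1 := by omega
    rw [this, Nat.factorial_succ, Finset.prod_range_succ]
    push_cast
    rw [ih]; push_cast; ring

lemma pow_mul_rpow {u a : ℝ} (hu : 0 ≤ u) (ha : -1 < a) (M : ℕ) :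
    u^M * u^a = u^((M:ℝ)+a) := by
  rcases eq_or_lt_of_le hu with h | h
  · match M with
    | 0 => simp
    | M+1 =>
      rw [← h]
      have h1 : (0:ℝ)^(M+1) = 0 := by simp
      have h2 : (0:ℝ)^(((M+1:ℕ):ℝ)+a) = 0 := by
        rw [Real.zero_rpow (by push_cast; linarith)]
      rw [h1, h2, zero_mul]
  · rw [← Real.rpow_natCast u M, ← Real.rpow_add h]

lemma descFact_cast (n j : ℕ) :
    (((n+j).descFactorial n : ℕ) : ℝ) * (j.factorial : ℝ) = ((n+j).factorial : ℝ) := by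
  have h : (n+j).descFactorial n * j.factorial = (n+j).factorial := by
    have := Nat.factorial_mul_descFactorial (Nat.le_add_right n j)
    simpa [Nat.add_sub_cancel_left, Nat.mul_comm] using this
  exact_mod_cast congrArg (Nat.cast : ℕ → ℝ) h

lemma poch_fact_le {a : ℝ} (ha : 0 < a) (K : ℕ) :
    a * (K.factorial : ℝ) ≤ poch a (K+1) := by
  rw [poch]
  have hKf : (K.factorial : ℝ) = ∏ i ∈ range K, ((i:ℝ)+1) := by
    induction K with
    | zero => simp
    | succ K ih =>
      rw [Finset.prod_range_succ, ← ih, Nat.factorial_succ]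
      push_cast; ring
  have h1 : ∀ i ∈ range K, ((i:ℝ)+1) ≤ a + ((i+1:ℕ):ℝ) := by
    intro i _; push_cast; linarith
  have h2 : ∏ i ∈ range K, ((i:ℝ)+1) ≤ ∏ i ∈ range K, (a + ((i+1:ℕ):ℝ)) :=
    Finset.prod_le_prod (fun i _ => by positivity) h1
  calc a * (K.factorial : ℝ) = (∏ i ∈ range K, ((i:ℝ)+1)) * a := by rw [hKf]; ring
    _ ≤ (∏ i ∈ range K, (a + ((i+1:ℕ):ℝ))) * (a + ((0:ℕ):ℝ)) := by
        simp only [Nat.cast_zero, add_zero]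
        exact mul_le_mul h2 le_rfl (le_of_lt ha)
          (Finset.prod_nonneg (fun i _ => by positivity))
    _ = ∏ i ∈ range (K+1), (a + (i:ℝ)) := (Finset.prod_range_succ' (fun i => a + (i:ℝ)) K).symm

lemma summable_aux {γ : ℝ} (hγ : -1 < γ) {z : ℝ} (hz : 0 < z) (N : ℕ) :
    Summable (fun m : ℕ => z^m / (m.factorial : ℝ) * (((N+m).factorial : ℝ) / poch (γ+1) (N+m+1))) := by
  have hg : (0:ℝ) < γ + 1 := by linarith
  refine Summable.of_nonneg_of_le (fun m => ?_) (fun m => ?_)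
    ((Real.summable_pow_div_factorial z).mul_right ((γ+1)⁻¹))
  · have := poch_pos hg (N+m+1); positivity
  · have h1 : ((N+m).factorial : ℝ) / poch (γ+1) (N+m+1) ≤ (γ+1)⁻¹ := by
      rw [div_le_iff₀ (poch_pos hg (N+m+1))]
      have h2 := poch_fact_le hg (N+m)
      have h3 := mul_le_mul_of_nonneg_left h2 (inv_nonneg.mpr hg.le)
      rw [← mul_assoc, inv_mul_cancel₀ (ne_of_gt hg), one_mul] at h3
      exact h3
    calc z^m / (m.factorial : ℝ) * (((N+m).factorial : ℝ) / poch (γ+1) (N+m+1))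
        ≤ z^m / (m.factorial : ℝ) * (γ+1)⁻¹ := by
          have hp : (0:ℝ) ≤ z^m / (m.factorial : ℝ) := by positivity
          exact mul_le_mul_of_nonneg_left h1 hp
      _ = z^m / (m.factorial : ℝ) * (γ+1)⁻¹ := rfl

lemma gbinom_nat {n k : ℕ} (hkn : k ≤ n) :
    gbinom (n:ℝ) (((n-k : ℕ) : ℕ) : ℝ) = (n.choose k : ℝ) := by
  rw [gbinom]
  have h1 : (n:ℝ) - ((n-k : ℕ):ℝ) = (k:ℝ) := by
    rw [Nat.cast_sub hkn]; ring
  rw [h1]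
  rw [Real.Gamma_nat_eq_factorial, Real.Gamma_nat_eq_factorial, Real.Gamma_nat_eq_factorial]
  rw [Nat.cast_choose ℝ hkn]
  rw [mul_comm]

lemma gbinom_real (r : ℝ) (k : ℕ) :
    gbinom r (k:ℝ) = Real.Gamma (r+1) / ((k.factorial : ℝ) * Real.Gamma (r - k + 1)) := by
  rw [gbinom, Real.Gamma_nat_eq_factorial]
/-- the `n`-th modified moment, `n ≥ 1`, expressed via a
`(1,1)`-generalized hypergeometric series. -/
theorem modMoment_eq (α z : ℝ) (hα : -1 < α) (hz : 0 < z) (n : ℕ) (hn : 1 ≤ n) :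
    Summable (fun k : ℕ =>
      poch ((n : ℝ) + 1) k / poch (α + 2 * n + 2) k * z ^ k / (Nat.factorial k : ℝ)) ∧
    modMoment α z n =
      (-1) ^ n * ((Nat.factorial n : ℝ) / ((poch (α + n + 1) n) ^ 2 * (α + 2 * n + 1))) *
        z ^ n * Real.exp (-z) *
        ∑' k : ℕ,
          poch ((n : ℝ) + 1) k / poch (α + 2 * n + 2) k * z ^ k / (Nat.factorial k : ℝ) := by
  have hnr : (1:ℝ) ≤ (n:ℝ) := by exact_mod_cast hn
  have hn1 : (0:ℝ) < (n:ℝ) + 1 := by linarith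
  have hb : (0:ℝ) < α + 2 * n + 2 := by linarith
  have hab : (n:ℝ) + 1 ≤ α + 2 * n + 2 := by linarith
  refine ⟨summable_hyp hn1 hab hz.le, ?_⟩
  obtain ⟨S, hS⟩ : ∃ S : ℝ, S = gbinom (2 * (n:ℝ) + α) (n:ℝ) := ⟨_, rfl⟩
  set c : ℕ → ℝ := fun k => (n.choose k : ℝ) * gbinom ((n:ℝ) + α) (k:ℝ) with hc
  set γ : ℕ → ℝ := fun k => ((n - k : ℕ) : ℝ) + α with hγdef
  have hγ : ∀ k, -1 < γ k := by
    intro k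
    have : (0:ℝ) ≤ ((n - k : ℕ) : ℝ) := Nat.cast_nonneg _
    simp only [hγdef]; linarith
  -- Step A : pointwise expansion of the shifted Jacobi polynomial
  have hSJ : ∀ x : ℝ, shiftedJacobiP α n x
      = ∑ k ∈ range (n + 1), (1 / S) * c k * ((x - 1) ^ k * x ^ (n - k)) := by
    intro x
    rw [shiftedJacobiP, jacobiP, show 2 * (n:ℝ) + 0 + α = 2 * (n:ℝ) + α from by ring, ← hS,
      Finset.mul_sum, Finset.mul_sum]
    apply Finset.sum_congr rfl
    intro k hk
    have hkn : k ≤ n := Nat.lt_succ_iff.mp (Finset.mem_range.mp hk)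
    have e0 : 2 * x - 1 - 1 = 2 * (x - 1) := by ring
    have e1 : 2 * x - 1 + 1 = 2 * x := by ring
    rw [e0, e1]
    have hg0 : gbinom ((n:ℝ) + 0) (((n-k:ℕ)):ℝ) = (n.choose k : ℝ) := by
      rw [add_zero]; exact gbinom_nat hkn
    rw [hg0, mul_pow, mul_pow, hc]
    obtain ⟨W, hW⟩ : ∃ W : ℝ, W = 1/(2:ℝ)^n := ⟨_, rfl⟩
    rw [← hW]
    have h2 : (2:ℝ)^k * 2^(n-k) = 2^n := by
      rw [← pow_add]; congr 1; omega
    have h3 : W * 2^n = 1 := by rw [hW]; field_simp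
    linear_combination (W * (1/S) * ((n.choose k : ℝ) * gbinom ((n:ℝ)+α) (k:ℝ))
      * (x-1)^k * x^(n-k)) * h2
      + ((1/S) * ((n.choose k : ℝ) * gbinom ((n:ℝ)+α) (k:ℝ)) * x^(n-k) * (x-1)^k) * h3
  -- Step B : modMoment as a finite sum of integrals
  set I : ℕ → ℝ := fun k => ∫ x in (0:ℝ)..1, ((x-1)^k * x^(n-k) * Real.exp (-z*x)) * x^α with hI
  have hMM : modMoment α z n = ∑ k ∈ range (n+1), (1/S * c k) * I k := by
    rw [modMoment]
    have hint : ∀ k ∈ range (n+1), IntervalIntegrable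
        (fun x : ℝ => (1/S * c k * ((x-1)^k * x^(n-k) * Real.exp (-z*x))) * x^α) volume 0 1 := by
      intro k _
      apply ii_mul_rpow hα
      apply Continuous.continuousOn
      fun_prop
    calc (∫ x in (0:ℝ)..1, shiftedJacobiP α n x * x^α * Real.exp (-z*x))
        = ∫ x in (0:ℝ)..1, ∑ k ∈ range (n+1),
            (1/S * c k * ((x-1)^k * x^(n-k) * Real.exp (-z*x))) * x^α := by
          apply intervalIntegral.integral_congr
          intro x _
          dsimp only
          rw [hSJ x, Finset.sum_mul, Finset.sum_mul]
          apply Finset.sum_congr rfl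
          intro k _
          ring
      _ = ∑ k ∈ range (n+1), ∫ x in (0:ℝ)..1,
            (1/S * c k * ((x-1)^k * x^(n-k) * Real.exp (-z*x))) * x^α :=
          intervalIntegral.integral_finset_sum hint
      _ = ∑ k ∈ range (n+1), (1/S * c k) * I k := by
          apply Finset.sum_congr rfl
          intro k _
          rw [hI]
          dsimp only
          rw [← intervalIntegral.integral_const_mul]
          apply intervalIntegral.integral_congr
          intro x _
          dsimp only
          ring
  -- Step C : reflection x ↦ 1 - t
  have hIC : ∀ k ∈ range (n+1), I k
      = ((-1:ℝ)^k * Real.exp (-z)) * ∫ t in (0:ℝ)..1, t^k * (1-t)^(γ k) * Real.exp (z*t) := by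
    intro k hk
    have hsub := intervalIntegral.integral_comp_sub_left (a := 0) (b := 1)
      (fun x : ℝ => ((x-1)^k * x^(n-k) * Real.exp (-z*x)) * x^α) 1
    norm_num at hsub
    rw [hI]
    dsimp only
    simp only [neg_mul]
    rw [← hsub, ← intervalIntegral.integral_const_mul]
    apply intervalIntegral.integral_congr
    intro t ht
    rw [Set.uIcc_of_le (by norm_num : (0:ℝ) ≤ 1)] at ht
    have h1t : (0:ℝ) ≤ 1 - t := by linarith [ht.2]
    have hexp : Real.exp (-(z*(1-t))) = Real.exp (-z) * Real.exp (z*t) := by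
      rw [← Real.exp_add]; congr 1; ring
    have hpow := pow_mul_rpow h1t hα (n-k)
    dsimp only
    simp only [hγdef]
    rw [neg_pow, hexp]
    linear_combination ((-1:ℝ)^k * t^k * Real.exp (-z) * Real.exp (z*t)) * hpow
  -- Gamma values and the constant identity
  have hA : (0:ℝ) < Real.Gamma (α+(n:ℝ)+1) := Real.Gamma_pos_of_pos (by linarith)
  have hB : (0:ℝ) < Real.Gamma (α+2*(n:ℝ)+1) := Real.Gamma_pos_of_pos (by linarith)
  have hB2 : (0:ℝ) < Real.Gamma (α+2*(n:ℝ)+2) := Real.Gamma_pos_of_pos (by linarith)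
  have hpochn : poch (α+(n:ℝ)+1) n = Real.Gamma (α+2*(n:ℝ)+1) / Real.Gamma (α+(n:ℝ)+1) := by
    have h := Gamma_poch (show (0:ℝ) < α+(n:ℝ)+1 by linarith) n
    rw [show α+(n:ℝ)+1+(n:ℝ) = α+2*(n:ℝ)+1 from by ring] at h
    rw [eq_div_iff (ne_of_gt hA)]
    linarith [h]
  have hG2 : Real.Gamma (α+2*(n:ℝ)+2) = (α+2*(n:ℝ)+1) * Real.Gamma (α+2*(n:ℝ)+1) := by
    have h := Real.Gamma_add_one (s := α+2*(n:ℝ)+1) (ne_of_gt (by linarith))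
    rw [show α+2*(n:ℝ)+2 = (α+2*(n:ℝ)+1)+1 from by ring, h]
  have hSval : S = Real.Gamma (α+2*(n:ℝ)+1) / ((n.factorial:ℝ) * Real.Gamma (α+(n:ℝ)+1)) := by
    rw [hS, gbinom, Real.Gamma_nat_eq_factorial,
      show 2*(n:ℝ)+α+1 = α+2*(n:ℝ)+1 from by ring,
      show 2*(n:ℝ)+α-(n:ℝ)+1 = α+(n:ℝ)+1 from by ring]
  have hS0 : S ≠ 0 := by
    rw [hSval]
    have : (0:ℝ) < (n.factorial:ℝ) := by positivity
    positivity
  have hconst : (1/S) * (Real.Gamma (α+(n:ℝ)+1) / Real.Gamma (α+2*(n:ℝ)+2))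
      = (n.factorial:ℝ) / ((poch (α+(n:ℝ)+1) n)^2 * (α+2*(n:ℝ)+1)) := by
    rw [hSval, hpochn, hG2]
    have h1 : (0:ℝ) < (n.factorial:ℝ) := by positivity
    have h2 : (0:ℝ) < α+2*(n:ℝ)+1 := by linarith
    field_simp
  -- Step D/E : expand each integral into a series and swap sums
  set G : ℕ → ℕ → ℝ := fun k m => (1/S * c k * ((-1:ℝ)^k * Real.exp (-z))) *
    (z^m / (m.factorial : ℝ) * (((k+m).factorial : ℝ) / poch (γ k + 1) (k+m+1))) with hG
  have hGsum : ∀ k, Summable (G k) := fun k =>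
    (summable_aux (hγ k) hz k).mul_left _
  have hMM2 : modMoment α z n = ∑' m : ℕ, ∑ k ∈ range (n+1), G k m := by
    rw [hMM, Summable.tsum_finsetSum (fun k _ => hGsum k)]
    apply Finset.sum_congr rfl
    intro k hk
    rw [hIC k hk, series_expand (hγ k) hz k, hG]
    dsimp only
    rw [← tsum_mul_left, ← tsum_mul_left]
    exact tsum_congr (fun m => by ring)
  -- Step F : evaluate the inner finite sum
  set D : ℕ → ℝ := fun m => 1/S * Real.exp (-z) * (z^m / (m.factorial:ℝ)) *
    (Real.Gamma (α+(n:ℝ)+1) / Real.Gamma (α+(n:ℝ)+(m:ℝ)+2)) with hD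
  set Q : ℕ → ℝ := fun m => (-1:ℝ)^n * (m.descFactorial n : ℝ) *
    ∏ i ∈ range (m-n), ((1:ℝ)+(n:ℝ)+(i:ℝ)) with hQ
  have hGkm : ∀ m : ℕ, ∀ k ∈ range (n+1), G k m
      = D m * ((-1:ℝ)^k * (n.choose k : ℝ) * ∏ i ∈ range m, ((k:ℝ)+1+(i:ℝ))) := by
    intro m k hk
    have hkn : k ≤ n := Nat.lt_succ_iff.mp (Finset.mem_range.mp hk)
    have hγk1 : (0:ℝ) < γ k + 1 := by linarith [hγ k]
    have hΓγ : (0:ℝ) < Real.Gamma (γ k + 1) := Real.Gamma_pos_of_pos hγk1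
    have hΓB : (0:ℝ) < Real.Gamma (α+(n:ℝ)+(m:ℝ)+2) := Real.Gamma_pos_of_pos (by
      have : (0:ℝ) ≤ (n:ℝ) := Nat.cast_nonneg n
      have : (0:ℝ) ≤ (m:ℝ) := Nat.cast_nonneg m
      linarith [Nat.cast_nonneg (α := ℝ) n, Nat.cast_nonneg (α := ℝ) m])
    have hpoch' : poch (γ k + 1) (k+m+1) = Real.Gamma (α+(n:ℝ)+(m:ℝ)+2) / Real.Gamma (γ k + 1) := by
      have h := Gamma_poch hγk1 (k+m+1)
      have harg : γ k + 1 + ((k+m+1:ℕ):ℝ) = α+(n:ℝ)+(m:ℝ)+2 := by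
        simp only [hγdef]
        push_cast [Nat.cast_sub hkn]
        ring
      rw [harg] at h
      rw [eq_div_iff (ne_of_gt hΓγ)]
      linarith [h]
    have hgb : gbinom ((n:ℝ)+α) (k:ℝ)
        = Real.Gamma (α+(n:ℝ)+1) / ((k.factorial:ℝ) * Real.Gamma (γ k + 1)) := by
      rw [gbinom_real,
        show (n:ℝ)+α+1 = α+(n:ℝ)+1 from by ring,
        show (n:ℝ)+α-(k:ℝ)+1 = γ k + 1 from by
          simp only [hγdef]; push_cast [Nat.cast_sub hkn]; ring]
    have hfr := fact_ratio k m
    rw [hG, hD, hc]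
    dsimp only
    rw [hgb, hpoch', hfr]
    have hk0 : ((k.factorial:ℝ)) ≠ 0 := by positivity
    have hm0 : ((m.factorial:ℝ)) ≠ 0 := by positivity
    field_simp
  have hrow : ∀ m : ℕ, ∑ k ∈ range (n+1), G k m = D m * Q m := by
    intro m
    rw [Finset.sum_congr rfl (hGkm m), ← Finset.mul_sum]
    congr 1
    have h := keyid n m 1
    push_cast at h
    rw [hQ]
    dsimp only
    exact h
  -- Step G/H : collapse the series
  have hgsum0 : Summable (fun m => ∑ k ∈ range (n+1), G k m) :=
    summable_sum (fun k _ => hGsum k)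
  have hgsum : Summable (fun m => D m * Q m) := hgsum0.congr hrow
  have hzero : ∀ i ∈ range n, D i * Q i = 0 := by
    intro i hi
    have h0 : i.descFactorial n = 0 := Nat.descFactorial_eq_zero_iff_lt.mpr (Finset.mem_range.mp hi)
    rw [hQ]
    dsimp only
    rw [h0]
    push_cast
    ring
  have hsplit := (Summable.sum_add_tsum_nat_add (f := fun m => D m * Q m) n hgsum).symm
  set P : ℝ := (-1:ℝ)^n * ((n.factorial:ℝ) / ((poch (α+(n:ℝ)+1) n)^2 * (α+2*(n:ℝ)+1))) * z^n * Real.exp (-z) with hP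
  have hjj : ∀ j : ℕ, D (j+n) * Q (j+n)
      = P * (poch ((n:ℝ)+1) j / poch (α+2*(n:ℝ)+2) j * z^j / (j.factorial:ℝ)) := by
    intro j
    have e : j + n = n + j := Nat.add_comm j n
    rw [e, hD, hQ]
    dsimp only
    rw [Nat.add_sub_cancel_left]
    have hprod : ∏ i ∈ range j, ((1:ℝ)+(n:ℝ)+(i:ℝ)) = poch ((n:ℝ)+1) j := by
      rw [poch]; exact Finset.prod_congr rfl (fun i _ => by ring)
    have hfac : ((n+j).factorial : ℝ) = (n.factorial:ℝ) * poch ((n:ℝ)+1) j := by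
      rw [fact_ratio n j, poch]
    have hdf : ((n+j).descFactorial n : ℝ) * (j.factorial : ℝ) = ((n+j).factorial : ℝ) :=
      descFact_cast n j
    have hGam : Real.Gamma (α+(n:ℝ)+((n+j:ℕ):ℝ)+2)
        = poch (α+2*(n:ℝ)+2) j * Real.Gamma (α+2*(n:ℝ)+2) := by
      rw [show α+(n:ℝ)+((n+j:ℕ):ℝ)+2 = (α+2*(n:ℝ)+2)+(j:ℝ) from by push_cast; ring]
      exact Gamma_poch hb j
    have hpow' : z^(n+j) = z^n * z^j := pow_add z n j
    have hj0 : (j.factorial:ℝ) ≠ 0 := by positivity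
    have hdf' : ((n+j).descFactorial n : ℝ)
        = ((n.factorial:ℝ) * poch ((n:ℝ)+1) j) / (j.factorial:ℝ) := by
      rw [eq_div_iff hj0, hdf, hfac]
    rw [hprod, hGam, hpow', hP, hdf',
      show ((n+j).factorial : ℝ) = (n.factorial:ℝ) * poch ((n:ℝ)+1) j from hfac,
      hSval, hpochn, hG2]
    have hnf0 : (n.factorial:ℝ) ≠ 0 := by positivity
    have hpn0 : poch ((n:ℝ)+1) j ≠ 0 := ne_of_gt (poch_pos hn1 j)
    have hpb0 : poch (α+2*(n:ℝ)+2) j ≠ 0 := ne_of_gt (poch_pos hb j)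
    have h21 : α+2*(n:ℝ)+1 ≠ 0 := ne_of_gt (by linarith)
    have hA0 : Real.Gamma (α+(n:ℝ)+1) ≠ 0 := ne_of_gt hA
    have hB0 : Real.Gamma (α+2*(n:ℝ)+1) ≠ 0 := ne_of_gt hB
    field_simp
  calc modMoment α z n = ∑' m : ℕ, ∑ k ∈ range (n+1), G k m := hMM2
    _ = ∑' m : ℕ, D m * Q m := tsum_congr hrow
    _ = ∑ i ∈ range n, (D i * Q i) + ∑' j : ℕ, D (j+n) * Q (j+n) := hsplit
    _ = ∑' j : ℕ, D (j+n) * Q (j+n) := by rw [Finset.sum_eq_zero hzero, zero_add]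
    _ = ∑' j : ℕ, P * (poch ((n:ℝ)+1) j / poch (α+2*(n:ℝ)+2) j * z^j / (j.factorial:ℝ)) :=
        tsum_congr hjj
    _ = P * ∑' j : ℕ, poch ((n:ℝ)+1) j / poch (α+2*(n:ℝ)+2) j * z^j / (j.factorial:ℝ) :=
        tsum_mul_left
    _ = _ := by rw [hP]
end

section
/- For all real α, β > -1 and all n, m ∈ ℕ with n + α + β + 1 > 0 and m + α + β + 1 > 0: ∫_{−1}^{1} P_n^{(α,β)}(x) P_m^{(α,β)}(x) (1−x)^α (1+x)^β dx = 2^{2n+α+β+1} · (Γ(n+α+1) Γ(n+β+1) Γ(n+α+β+1) · n!) / ((2n+α+β+1) · Γ(2n+α+β+1)²) · δ_{n,m}, where δ_{n,m} is the Kronecker delta. -/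
open Real MeasureTheory Finset Filter

section AuxJacobi
open Polynomial

lemma desc_smeval_eq_prod (r : ℝ) (j : ℕ) :
    (descPochhammer ℤ j).smeval r = ∏ i ∈ Finset.range j, (r - i) := by
  induction j with
  | zero => simp [descPochhammer_zero]
  | succ j ih =>
    rw [descPochhammer_succ_right, Polynomial.smeval_mul, ih, Finset.prod_range_succ]
    congr 1
    simp [Polynomial.smeval_sub, Polynomial.smeval_X, Polynomial.smeval_natCast]

lemma Gamma_prod (r : ℝ) (j : ℕ) (h : ∀ i : ℕ, i < j → r - i ≠ 0) :
    Real.Gamma (r + 1) = (∏ i ∈ Finset.range j, (r - i)) * Real.Gamma (r - j + 1) := by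
  induction j with
  | zero => simp
  | succ j ih =>
    rw [ih (fun i hi => h i (by omega)), Finset.prod_range_succ, mul_assoc]
    congr 1
    have h1 : r - ((j + 1 : ℕ) : ℝ) + 1 = r - j := by push_cast; ring
    have h2 : r - (j : ℝ) + 1 = (r - j) + 1 := by ring
    rw [h1, h2, Real.Gamma_add_one (h j (by omega))]

lemma gbinom_eq_prod (r : ℝ) (j : ℕ) (h : 0 < r - j + 1) :
    gbinom r (j : ℝ) = (∏ i ∈ Finset.range j, (r - i)) / (j.factorial : ℝ) := by
  have hne : ∀ i : ℕ, i < j → r - i ≠ 0 := by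
    intro i hi
    have : (i : ℝ) ≤ (j : ℝ) - 1 := by
      have : (i : ℝ) + 1 ≤ j := by exact_mod_cast Nat.succ_le_of_lt hi
      linarith
    intro hc; nlinarith [h]
  have hΓ : Real.Gamma (r - j + 1) ≠ 0 := ne_of_gt (Real.Gamma_pos_of_pos h)
  rw [gbinom, Gamma_prod r j hne]
  rw [Real.Gamma_nat_eq_factorial]
  field_simp

lemma gbinom_vandermonde (a b : ℝ) (n : ℕ) (ha : 0 < a - n + 1) (hb : 0 < b - n + 1)
    (hab : 0 < a + b - n + 1) :
    ∑ k ∈ Finset.range (n + 1), gbinom a ((n - k : ℕ) : ℝ) * gbinom b (k : ℝ) =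
      gbinom (a + b) (n : ℝ) := by
  have key := Ring.descPochhammer_smeval_add (R := ℝ) (r := b) (s := a) n (Commute.all b a)
  rw [Finset.Nat.sum_antidiagonal_eq_sum_range_succ_mk] at key
  simp only [desc_smeval_eq_prod] at key
  -- key : ∏ i ∈ range n, (a + b - i) = ∑ k ∈ range (n+1), C(n,k) * (Pa k * Pb (n-k))
  rw [gbinom_eq_prod (a + b) n hab]
  have hsub : ∀ k ∈ Finset.range (n + 1),
      gbinom a ((n - k : ℕ) : ℝ) * gbinom b (k : ℝ) =
      (n.choose k : ℝ) * ((∏ i ∈ Finset.range k, (b - i)) * (∏ i ∈ Finset.range (n - k), (a - i)))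
        / (n.factorial : ℝ) := by
    intro k hk
    have hk' : k ≤ n := Nat.lt_succ_iff.mp (Finset.mem_range.mp hk)
    have h1 : 0 < a - ((n - k : ℕ) : ℝ) + 1 := by
      have : ((n - k : ℕ) : ℝ) ≤ (n : ℝ) := by exact_mod_cast Nat.sub_le n k
      linarith
    have h2 : 0 < b - (k : ℝ) + 1 := by
      have : (k : ℝ) ≤ (n : ℝ) := by exact_mod_cast hk'
      linarith
    rw [gbinom_eq_prod a _ h1, gbinom_eq_prod b _ h2]
    have hfac : ((n - k).factorial : ℝ) * (k.factorial : ℝ) * (n.choose k : ℝ) = n.factorial := by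
      have h0 := Nat.choose_mul_factorial_mul_factorial hk'
      push_cast [← h0]; ring
    have hne1 : ((n - k).factorial : ℝ) ≠ 0 := by positivity
    have hne2 : ((k).factorial : ℝ) ≠ 0 := by positivity
    field_simp
    rw [← hfac]
    ring
  rw [Finset.sum_congr rfl hsub, ← Finset.sum_div, ← key]
  congr 1
  exact Finset.prod_congr rfl fun i _ => by ring

lemma findiff (n : ℕ) (P : Polynomial ℝ) (h : P.natDegree ≤ n) :
    ∑ k ∈ Finset.range (n + 1), (-1 : ℝ) ^ k * (n.choose k : ℝ) * P.eval (k : ℝ) =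
      (-1 : ℝ) ^ n * (n.factorial : ℝ) * P.coeff n := by
  induction n generalizing P with
  | zero =>
    rw [Polynomial.eq_C_of_natDegree_le_zero h]
    simp
  | succ n ih =>
    set Q : Polynomial ℝ := P - Polynomial.taylor 1 P with hQ
    have heval : ∀ k : ℕ, Q.eval (k : ℝ) = P.eval (k : ℝ) - P.eval ((k + 1 : ℕ) : ℝ) := by
      intro k
      rw [hQ, Polynomial.eval_sub, Polynomial.taylor_eval]
      push_cast
      ring
    have hHD : ∀ m : ℕ, n + 1 ≤ m → (Polynomial.hasseDeriv m P).eval 1 = P.coeff m := by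
      intro m hm
      have hdeg : (Polynomial.hasseDeriv m P).natDegree ≤ 0 := by
        refine le_trans (Polynomial.natDegree_hasseDeriv_le P m) ?_
        omega
      rw [Polynomial.eq_C_of_natDegree_le_zero hdeg, Polynomial.eval_C,
        Polynomial.hasseDeriv_coeff]
      simp
    have hQdeg : Q.natDegree ≤ n := by
      refine Polynomial.natDegree_le_iff_coeff_eq_zero.mpr fun m hm => ?_
      have hm' : n + 1 ≤ m := hm
      rw [hQ, Polynomial.coeff_sub, Polynomial.taylor_coeff, hHD m hm', sub_self]
    have hQcoeff : Q.coeff n = -((n + 1 : ℕ) : ℝ) * P.coeff (n + 1) := by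
      have hdeg : (Polynomial.hasseDeriv n P).natDegree < 2 := by
        have := Polynomial.natDegree_hasseDeriv_le P n
        omega
      have heval1 : (Polynomial.hasseDeriv n P).eval 1 =
          (Polynomial.hasseDeriv n P).coeff 0 + (Polynomial.hasseDeriv n P).coeff 1 := by
        rw [Polynomial.eval_eq_sum_range' hdeg]
        simp [Finset.sum_range_succ]
      rw [hQ, Polynomial.coeff_sub, Polynomial.taylor_coeff, heval1,
        Polynomial.hasseDeriv_coeff, Polynomial.hasseDeriv_coeff]
      rw [Nat.add_comm 1 n, Nat.choose_succ_self_right]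
      simp only [Nat.zero_add, Nat.choose_self, Nat.cast_one, one_mul]
      push_cast; ring
    -- sum manipulation
    have pascal : ∀ k : ℕ, ((n + 1).choose (k + 1) : ℝ) = (n.choose k : ℝ) + (n.choose (k + 1) : ℝ) := by
      intro k; exact_mod_cast congrArg (Nat.cast (R := ℝ)) (Nat.choose_succ_succ (n) (k))
    rw [Finset.sum_range_succ']
    have hsplit : ∀ k ∈ Finset.range (n + 1),
        (-1 : ℝ) ^ (k + 1) * ((n + 1).choose (k + 1) : ℝ) * P.eval ((k + 1 : ℕ) : ℝ) =
        -((-1 : ℝ) ^ k * (n.choose k : ℝ) * P.eval ((k + 1 : ℕ) : ℝ))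
          + (-1 : ℝ) ^ (k + 1) * (n.choose (k + 1) : ℝ) * P.eval ((k + 1 : ℕ) : ℝ) := by
      intro k _
      rw [pascal k]; push_cast; ring
    rw [Finset.sum_congr rfl hsplit, Finset.sum_add_distrib]
    have hB : (∑ k ∈ Finset.range (n + 1),
          (-1 : ℝ) ^ (k + 1) * (n.choose (k + 1) : ℝ) * P.eval ((k + 1 : ℕ) : ℝ))
        + (-1 : ℝ) ^ (0 : ℕ) * (((n + 1).choose 0 : ℕ) : ℝ) * P.eval ((0 : ℕ) : ℝ)
        = ∑ k ∈ Finset.range (n + 1), (-1 : ℝ) ^ k * (n.choose k : ℝ) * P.eval (k : ℝ) := by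
      have := Finset.sum_range_succ' (fun k => (-1 : ℝ) ^ k * (n.choose k : ℝ) * P.eval (k : ℝ)) (n + 1)
      simp only [Nat.choose_zero_right, Nat.cast_one] at this ⊢
      rw [← this, Finset.sum_range_succ]
      simp [Nat.choose_succ_self]
    rw [add_assoc, hB, ← Finset.sum_add_distrib]
    have hfin : ∑ k ∈ Finset.range (n + 1),
        (-((-1 : ℝ) ^ k * (n.choose k : ℝ) * P.eval ((k + 1 : ℕ) : ℝ))
          + (-1 : ℝ) ^ k * (n.choose k : ℝ) * P.eval (k : ℝ))
        = ∑ k ∈ Finset.range (n + 1), (-1 : ℝ) ^ k * (n.choose k : ℝ) * Q.eval (k : ℝ) := by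
      refine Finset.sum_congr rfl fun k _ => ?_
      rw [heval k]; ring
    rw [hfin, ih Q hQdeg, hQcoeff]
    push_cast
    rw [Nat.factorial_succ]
    push_cast; ring

lemma betaIntegrable (a b : ℝ) (ha : -1 < a) (hb : -1 < b) :
    IntervalIntegrable (fun t : ℝ => t ^ a * (1 - t) ^ b) volume 0 1 := by
  have half : ∀ u v : ℝ, -1 < u → IntervalIntegrable (fun t : ℝ => t ^ u * (1 - t) ^ v)
      volume 0 (1/2) := by
    intro u v hu
    refine (intervalIntegral.intervalIntegrable_rpow' hu).mul_continuousOn ?_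
    refine ContinuousOn.rpow_const (by fun_prop) ?_
    intro x hx
    rw [Set.uIcc_of_le (by norm_num)] at hx
    left
    have := hx.2
    intro hc
    nlinarith [hx.1, hx.2]
  have h1 := half a b ha
  have h2' := half b a hb
  have h2 := (h2'.comp_sub_left 1)
  norm_num at h2
  -- h2 : IntervalIntegrable (fun x => (1 - x) ^ b * (1 - (1 - x)) ^ a) volume 1 (1/2)
  have h2'' : IntervalIntegrable (fun t : ℝ => t ^ a * (1 - t) ^ b) volume (1/2) 1 := by
    have heq : (fun x : ℝ => (1 - x) ^ b * x ^ a)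
        = fun t : ℝ => t ^ a * (1 - t) ^ b := by
      funext x; ring
    rw [heq] at h2
    exact h2.symm
  exact h1.trans h2''

lemma betaValue (a b : ℝ) (ha : 0 < a) (hb : 0 < b) :
    ∫ t in (0:ℝ)..1, t ^ (a - 1) * (1 - t) ^ (b - 1) =
      Real.Gamma a * Real.Gamma b / Real.Gamma (a + b) := by
  have hre : Complex.betaIntegral (a : ℂ) (b : ℂ) =
      ((∫ t in (0:ℝ)..1, t ^ (a - 1) * (1 - t) ^ (b - 1) : ℝ) : ℂ) := by
    rw [Complex.betaIntegral, ← intervalIntegral.integral_ofReal]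
    refine intervalIntegral.integral_congr ?_
    intro x hx
    rw [Set.uIcc_of_le (by norm_num : (0:ℝ) ≤ 1)] at hx
    push_cast
    rw [Complex.ofReal_cpow hx.1, Complex.ofReal_cpow (by linarith [hx.2] : (0:ℝ) ≤ 1 - x)]
    push_cast
    ring
  have h := Complex.Gamma_mul_Gamma_eq_betaIntegral
    (s := (a : ℂ)) (t := (b : ℂ)) (by simpa using ha) (by simpa using hb)
  rw [hre, ← Complex.ofReal_add, Complex.Gamma_ofReal, Complex.Gamma_ofReal,
    Complex.Gamma_ofReal, ← Complex.ofReal_mul, ← Complex.ofReal_mul] at h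
  have h' := Complex.ofReal_injective h
  have hΓ : Real.Gamma (a + b) ≠ 0 := ne_of_gt (Real.Gamma_pos_of_pos (by linarith))
  field_simp
  rw [h']
  ring

lemma natDegree_prod_le' {ι : Type*} (s : Finset ι) (f : ι → Polynomial ℝ)
    (h : ∀ i ∈ s, (f i).natDegree ≤ 1) : (∏ i ∈ s, f i).natDegree ≤ s.card := by
  refine le_trans (Polynomial.natDegree_prod_le s f) ?_
  calc ∑ i ∈ s, (f i).natDegree ≤ ∑ i ∈ s, 1 := Finset.sum_le_sum h
  _ = s.card := by simp

lemma momentsum (α β : ℝ) (hα : -1 < α) (hβ : -1 < β) (n p q : ℕ) (hpq : p + q ≤ n) :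
    ∑ k ∈ Finset.range (n + 1),
      gbinom (n + α) ((n - k : ℕ) : ℝ) * gbinom (n + β) (k : ℝ) * (-1 : ℝ) ^ k *
        (Real.Gamma (β + q + ((n - k : ℕ) : ℝ) + 1) * Real.Gamma (α + p + k + 1)) =
      (if p + q = n then (-1 : ℝ) ^ p else 0) *
        (Real.Gamma (n + α + 1) * Real.Gamma (n + β + 1)) := by
  set A : Polynomial ℝ := ∏ i ∈ Finset.range p, (Polynomial.X + Polynomial.C (α + p - i)) with hA
  set B' : Polynomial ℝ := ∏ i ∈ Finset.range q, (Polynomial.X - Polynomial.C (β + n + q - i))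
    with hB'
  set B : Polynomial ℝ := ∏ i ∈ Finset.range q, (Polynomial.C (β + n + q - i) - Polynomial.X)
    with hB
  set P : Polynomial ℝ := A * B with hP
  have hBeq : B = Polynomial.C ((-1 : ℝ) ^ q) * B' := by
    rw [hB, hB']
    calc ∏ i ∈ Finset.range q, (Polynomial.C (β + n + q - i) - Polynomial.X)
        = ∏ i ∈ Finset.range q,
          (Polynomial.C (-1 : ℝ) * (Polynomial.X - Polynomial.C (β + n + q - i))) :=
          Finset.prod_congr rfl fun i _ => by
            rw [Polynomial.C_neg, Polynomial.C_1, neg_one_mul, neg_sub]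
      _ = (∏ _i ∈ Finset.range q, Polynomial.C (-1 : ℝ)) *
          ∏ i ∈ Finset.range q, (Polynomial.X - Polynomial.C (β + n + q - i)) :=
          Finset.prod_mul_distrib
      _ = Polynomial.C ((-1 : ℝ) ^ q) *
          ∏ i ∈ Finset.range q, (Polynomial.X - Polynomial.C (β + n + q - i)) := by
          rw [Finset.prod_const, Finset.card_range, ← map_pow]
  have hAmonic : A.Monic :=
    Polynomial.monic_prod_of_monic _ _ fun i _ => Polynomial.monic_X_add_C _
  have hB'monic : B'.Monic :=
    Polynomial.monic_prod_of_monic _ _ fun i _ => Polynomial.monic_X_sub_C _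
  have hM : (A * B').Monic := hAmonic.mul hB'monic
  have hdegA : A.natDegree = p := by
    rw [hA, Polynomial.natDegree_prod _ _ fun i _ => (Polynomial.monic_X_add_C _).ne_zero]
    simp only [Polynomial.natDegree_X_add_C]
    simp
  have hdegB' : B'.natDegree = q := by
    rw [hB', Polynomial.natDegree_prod _ _ fun i _ => (Polynomial.monic_X_sub_C _).ne_zero]
    simp only [Polynomial.natDegree_X_sub_C]
    simp
  have hdegM : (A * B').natDegree = p + q := by
    rw [Polynomial.natDegree_mul hAmonic.ne_zero hB'monic.ne_zero, hdegA, hdegB']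
  have hdeg : P.natDegree ≤ n := by
    rw [hP, hBeq, ← mul_assoc, mul_comm A, mul_assoc]
    refine le_trans (Polynomial.natDegree_mul_le) ?_
    rw [hdegM]
    simp [hpq]
  have hcoeff : P.coeff n = if p + q = n then (-1 : ℝ) ^ q else 0 := by
    rw [hP, hBeq, ← mul_assoc, mul_comm A, mul_assoc, Polynomial.coeff_C_mul]
    by_cases hc : p + q = n
    · rw [if_pos hc]
      have : (A * B').coeff n = 1 := by
        rw [← hc, ← hdegM]
        exact hM.coeff_natDegree
      rw [this, mul_one]
    · rw [if_neg hc]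
      rw [Polynomial.coeff_eq_zero_of_natDegree_lt (by rw [hdegM]; omega), mul_zero]
  have heval : ∀ k : ℕ, P.eval (k : ℝ) =
      (∏ i ∈ Finset.range p, (α + p + k - i)) * ∏ i ∈ Finset.range q, (β + n + q - k - i) := by
    intro k
    rw [hP, hB, hA, Polynomial.eval_mul, Polynomial.eval_prod, Polynomial.eval_prod]
    congr 1
    · exact Finset.prod_congr rfl fun i _ => by simp; ring
    · exact Finset.prod_congr rfl fun i _ => by simp; ring
  have key := findiff n P hdeg
  rw [hcoeff] at key
  have hterm : ∀ k ∈ Finset.range (n + 1),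
      gbinom (n + α) ((n - k : ℕ) : ℝ) * gbinom (n + β) (k : ℝ) * (-1 : ℝ) ^ k *
        (Real.Gamma (β + q + ((n - k : ℕ) : ℝ) + 1) * Real.Gamma (α + p + k + 1)) =
      Real.Gamma (n + α + 1) * Real.Gamma (n + β + 1) / (n.factorial : ℝ) *
        ((-1 : ℝ) ^ k * (n.choose k : ℝ) * P.eval (k : ℝ)) := by
    intro k hk
    have hk' : k ≤ n := Nat.lt_succ_iff.mp (Finset.mem_range.mp hk)
    have hcast : ((n - k : ℕ) : ℝ) = (n : ℝ) - (k : ℝ) := by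
      exact Nat.cast_sub hk'
    have hΓα : (0:ℝ) < α + k + 1 := by
      have : (0:ℝ) ≤ k := Nat.cast_nonneg k
      linarith
    have hΓβ : (0:ℝ) < β + ((n:ℝ) - k) + 1 := by
      have : (k:ℝ) ≤ n := by exact_mod_cast hk'
      linarith
    have gb1 : gbinom (n + α) ((n - k : ℕ) : ℝ) =
        Real.Gamma (n + α + 1) / (((n - k).factorial : ℝ) * Real.Gamma (α + k + 1)) := by
      simp only [gbinom]
      rw [Real.Gamma_nat_eq_factorial, hcast,
        show (n:ℝ) + α - ((n:ℝ) - (k:ℝ)) + 1 = α + k + 1 by ring]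
    have gb2 : gbinom (n + β) (k : ℝ) =
        Real.Gamma (n + β + 1) / ((k.factorial : ℝ) * Real.Gamma (β + ((n:ℝ) - k) + 1)) := by
      simp only [gbinom]
      rw [show ((k:ℝ) + 1) = (((k:ℕ):ℝ) + 1) by push_cast; ring, Real.Gamma_nat_eq_factorial,
        show (n:ℝ) + β - (k:ℝ) + 1 = β + ((n:ℝ) - k) + 1 by ring]
    have gΓ1 : Real.Gamma (α + p + k + 1) =
        (∏ i ∈ Finset.range p, (α + p + k - i)) * Real.Gamma (α + k + 1) := by
      have h := Gamma_prod (α + p + k) p ?_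
      · rw [show α + (p:ℝ) + k + 1 = (α + p + k) + 1 by ring, h,
          show α + (p:ℝ) + (k:ℝ) - (p:ℝ) + 1 = α + k + 1 by ring]
      · intro i hi
        have hip : (i:ℝ) ≤ (p:ℝ) - 1 := by
          have : (i:ℝ) + 1 ≤ p := by exact_mod_cast Nat.succ_le_of_lt hi
          linarith
        have : (0:ℝ) ≤ k := Nat.cast_nonneg k
        intro hc; nlinarith
    have gΓ2 : Real.Gamma (β + q + ((n - k : ℕ) : ℝ) + 1) =
        (∏ i ∈ Finset.range q, (β + n + q - k - i)) * Real.Gamma (β + ((n:ℝ) - k) + 1) := by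
      have h := Gamma_prod (β + q + ((n:ℝ) - k)) q ?_
      · rw [hcast, show β + (q:ℝ) + ((n:ℝ) - k) + 1 = (β + q + ((n:ℝ) - k)) + 1 by ring, h,
          show β + (q:ℝ) + ((n:ℝ) - (k:ℝ)) - (q:ℝ) + 1 = β + ((n:ℝ) - k) + 1 by ring]
        congr 1
        exact Finset.prod_congr rfl fun i _ => by ring
      · intro i hi
        have hiq : (i:ℝ) ≤ (q:ℝ) - 1 := by
          have : (i:ℝ) + 1 ≤ q := by exact_mod_cast Nat.succ_le_of_lt hi
          linarith
        have hkn : (k:ℝ) ≤ n := by exact_mod_cast hk'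
        intro hc; nlinarith
    have hchoose : (((n - k).factorial : ℕ) : ℝ) * ((k.factorial : ℕ) : ℝ) *
        ((n.choose k : ℕ) : ℝ) = ((n.factorial : ℕ) : ℝ) := by
      have h0 := Nat.choose_mul_factorial_mul_factorial hk'
      push_cast [← h0]; ring
    have hne1 : Real.Gamma (α + k + 1) ≠ 0 := ne_of_gt (Real.Gamma_pos_of_pos hΓα)
    have hne2 : Real.Gamma (β + ((n:ℝ) - k) + 1) ≠ 0 := ne_of_gt (Real.Gamma_pos_of_pos hΓβ)
    have hne3 : (((n - k).factorial : ℕ) : ℝ) ≠ 0 := by positivity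
    have hne4 : ((k.factorial : ℕ) : ℝ) ≠ 0 := by positivity
    have hne5 : ((n.factorial : ℕ) : ℝ) ≠ 0 := by positivity
    rw [gb1, gb2, gΓ1, gΓ2, heval k]
    field_simp
    rw [← hchoose]
    ring
  rw [Finset.sum_congr rfl hterm, ← Finset.mul_sum, key]
  by_cases hc : p + q = n
  · rw [if_pos hc, if_pos hc]
    have hsgn : ((-1:ℝ)) ^ n * (-1:ℝ) ^ q = (-1:ℝ) ^ p := by
      rw [← hc, pow_add, mul_assoc, ← mul_pow]
      norm_num
    field_simp
    rw [← hsgn]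
    ring
  · rw [if_neg hc, if_neg hc]
    simp

lemma ae_eq_basic (u v : ℝ) (j l : ℕ) :
    ∀ᵐ t : ℝ ∂volume, t ∈ Set.uIoc (0:ℝ) 1 →
      (1 - t) ^ j * t ^ l * ((1 - t) ^ u * t ^ v) = t ^ (v + l) * (1 - t) ^ (u + j) := by
  have h1 : ∀ᵐ t : ℝ ∂volume, t ≠ (1 : ℝ) := by
    rw [MeasureTheory.ae_iff]
    simp only [not_not]
    rw [show {a : ℝ | a = 1} = {(1:ℝ)} from rfl]
    exact measure_singleton 1
  filter_upwards [h1] with t ht hmem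
  rw [Set.uIoc_of_le (by norm_num : (0:ℝ) ≤ 1)] at hmem
  have ht0 : 0 < t := hmem.1
  have ht1 : t < 1 := lt_of_le_of_ne hmem.2 ht
  rw [← Real.rpow_natCast t l, ← Real.rpow_natCast (1 - t) j,
    show v + (l:ℝ) = (l:ℝ) + v by ring, show u + (j:ℝ) = (j:ℝ) + u by ring,
    Real.rpow_add ht0, Real.rpow_add (by linarith : (0:ℝ) < 1 - t)]
  ring

lemma basicIntegrable (u v : ℝ) (hu : -1 < u) (hv : -1 < v) (j l : ℕ) :
    IntervalIntegrable (fun t : ℝ => (1 - t) ^ j * t ^ l * ((1 - t) ^ u * t ^ v))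
      volume 0 1 := by
  have hb := betaIntegrable (v + l) (u + j) (by have : (0:ℝ) ≤ l := Nat.cast_nonneg l; linarith)
    (by have : (0:ℝ) ≤ j := Nat.cast_nonneg j; linarith)
  rw [intervalIntegrable_iff] at hb ⊢
  exact hb.congr ((MeasureTheory.ae_restrict_iff' measurableSet_uIoc).mpr
    ((ae_eq_basic u v j l).mono fun t h ht => (h ht).symm))

lemma basicIntegral (u v : ℝ) (hu : -1 < u) (hv : -1 < v) (j l : ℕ) :
    (∫ t in (0:ℝ)..1, (1 - t) ^ j * t ^ l * ((1 - t) ^ u * t ^ v)) =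
      Real.Gamma (v + l + 1) * Real.Gamma (u + j + 1) / Real.Gamma (u + v + j + l + 2) := by
  rw [intervalIntegral.integral_congr_ae (ae_eq_basic u v j l)]
  have hval := betaValue (v + l + 1) (u + j + 1)
    (by have : (0:ℝ) ≤ l := Nat.cast_nonneg l; linarith)
    (by have : (0:ℝ) ≤ j := Nat.cast_nonneg j; linarith)
  rw [show v + (l:ℝ) + 1 - 1 = v + l by ring, show u + (j:ℝ) + 1 - 1 = u + j by ring] at hval
  rw [hval, show v + (l:ℝ) + 1 + (u + j + 1) = u + v + j + l + 2 by ring]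

noncomputable def jsum (α β : ℝ) (n : ℕ) (t : ℝ) : ℝ :=
  ∑ k ∈ Finset.range (n + 1),
    gbinom (n + α) ((n - k : ℕ) : ℝ) * gbinom (n + β) (k : ℝ) * (-1 : ℝ) ^ k *
      (1 - t) ^ k * t ^ (n - k)

lemma jsum_rw (α β : ℝ) (n p q : ℕ) : (fun t : ℝ =>
      jsum α β n t * ((1 - t) ^ p * t ^ q * ((1 - t) ^ α * t ^ β))) =
    (fun t : ℝ => ∑ k ∈ Finset.range (n + 1),
      (gbinom (n + α) ((n - k : ℕ) : ℝ) * gbinom (n + β) (k : ℝ) * (-1 : ℝ) ^ k) *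
        ((1 - t) ^ (k + p) * t ^ ((n - k) + q) * ((1 - t) ^ α * t ^ β))) := by
  funext t
  rw [jsum, Finset.sum_mul]
  exact Finset.sum_congr rfl fun k _ => by rw [pow_add, pow_add]; ring

lemma jsum_integrable (α β : ℝ) (hα : -1 < α) (hβ : -1 < β) (n p q : ℕ) :
    IntervalIntegrable (fun t : ℝ =>
      jsum α β n t * ((1 - t) ^ p * t ^ q * ((1 - t) ^ α * t ^ β))) volume 0 1 := by
  have h := IntervalIntegrable.sum (μ := volume) (a := (0:ℝ)) (b := 1) (Finset.range (n + 1))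
    (f := fun k => fun t : ℝ =>
      (gbinom (n + α) ((n - k : ℕ) : ℝ) * gbinom (n + β) (k : ℝ) * (-1 : ℝ) ^ k) *
        ((1 - t) ^ (k + p) * t ^ ((n - k) + q) * ((1 - t) ^ α * t ^ β)))
    (fun k _ => (basicIntegrable α β hα hβ (k + p) ((n - k) + q)).const_mul _)
  rw [jsum_rw]
  rw [Finset.sum_fn] at h
  exact h

lemma moment (α β : ℝ) (hα : -1 < α) (hβ : -1 < β) (n p q : ℕ) (hpq : p + q ≤ n) :
    (∫ t in (0:ℝ)..1,
      jsum α β n t * ((1 - t) ^ p * t ^ q * ((1 - t) ^ α * t ^ β))) =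
      (if p + q = n then (-1 : ℝ) ^ p else 0) *
        (Real.Gamma (n + α + 1) * Real.Gamma (n + β + 1)) /
        Real.Gamma (α + β + n + p + q + 2) := by
  rw [jsum_rw, intervalIntegral.integral_finset_sum (fun k _ =>
    ((basicIntegrable α β hα hβ (k + p) ((n - k) + q)).const_mul _))]
  simp only [intervalIntegral.integral_const_mul]
  have hstep : ∀ k ∈ Finset.range (n + 1),
      (gbinom (n + α) ((n - k : ℕ) : ℝ) * gbinom (n + β) (k : ℝ) * (-1 : ℝ) ^ k) *
        (∫ t in (0:ℝ)..1, (1 - t) ^ (k + p) * t ^ ((n - k) + q) * ((1 - t) ^ α * t ^ β)) =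
      (gbinom (n + α) ((n - k : ℕ) : ℝ) * gbinom (n + β) (k : ℝ) * (-1 : ℝ) ^ k *
        (Real.Gamma (β + q + ((n - k : ℕ) : ℝ) + 1) * Real.Gamma (α + p + k + 1))) /
        Real.Gamma (α + β + n + p + q + 2) := by
    intro k hk
    have hk' : k ≤ n := Nat.lt_succ_iff.mp (Finset.mem_range.mp hk)
    rw [basicIntegral α β hα hβ (k + p) ((n - k) + q)]
    rw [show β + (((n - k) + q : ℕ) : ℝ) + 1 = β + q + ((n - k : ℕ) : ℝ) + 1 by push_cast; ring]
    rw [show α + (((k + p) : ℕ) : ℝ) + 1 = α + p + k + 1 by push_cast; ring]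
    rw [show α + β + (((k + p) : ℕ) : ℝ) + (((n - k) + q : ℕ) : ℝ) + 2
        = α + β + n + p + q + 2 by push_cast [Nat.cast_sub hk']; ring]
    ring
  rw [Finset.sum_congr rfl hstep, ← Finset.sum_div, momentsum α β hα hβ n p q hpq]

lemma jacobi_shift (α β : ℝ) (n : ℕ) (t : ℝ) :
    jacobiP α β n (2 * t - 1) =
      (2 ^ n / gbinom (2 * n + α + β) (n : ℝ)) * jsum α β n t := by
  rw [jacobiP, jsum, Finset.mul_sum, Finset.mul_sum]
  refine Finset.sum_congr rfl fun k hk => ?_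
  have h1 : (2 * t - 1 - 1) ^ k = (-1 : ℝ) ^ k * 2 ^ k * (1 - t) ^ k := by
    rw [show 2 * t - 1 - 1 = (-1) * 2 * (1 - t) by ring, mul_pow, mul_pow]
  have h2 : (2 * t - 1 + 1) ^ (n - k) = 2 ^ (n - k) * t ^ (n - k) := by
    rw [show 2 * t - 1 + 1 = 2 * t by ring, mul_pow]
  have h3 : (2 : ℝ) ^ k * 2 ^ (n - k) = 2 ^ n := by
    rw [← pow_add]
    congr 1
    exact Nat.add_sub_cancel' (Nat.lt_succ_iff.mp (Finset.mem_range.mp hk))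
  rw [h1, h2, ← h3]
  ring

lemma jsum_mul (α β : ℝ) (m : ℕ) (t X : ℝ) :
    jsum α β m t * X = ∑ k ∈ Finset.range (m + 1),
      gbinom (m + α) ((m - k : ℕ) : ℝ) * gbinom (m + β) (k : ℝ) * (-1 : ℝ) ^ k *
        ((1 - t) ^ k * t ^ (m - k) * X) := by
  rw [jsum, Finset.sum_mul]
  exact Finset.sum_congr rfl fun k _ => by ring

theorem main' (α β : ℝ) (hα : -1 < α) (hβ : -1 < β) (n m : ℕ) (hmn : m ≤ n)
    (hn : 0 < (n : ℝ) + α + β + 1) :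
    ∫ x in (-1:ℝ)..1, jacobiP α β n x * jacobiP α β m x * (1 - x) ^ α * (1 + x) ^ β =
      if n = m then
        (2 : ℝ) ^ (2 * (n : ℝ) + α + β + 1) *
          (Real.Gamma (n + α + 1) * Real.Gamma (n + β + 1) *
            Real.Gamma (n + α + β + 1) * (Nat.factorial n : ℝ)) /
          ((2 * n + α + β + 1) * (Real.Gamma (2 * n + α + β + 1)) ^ 2)
      else 0 := by
  set f : ℝ → ℝ := fun x =>
    jacobiP α β n x * jacobiP α β m x * (1 - x) ^ α * (1 + x) ^ β with hf
  set S : ℝ := gbinom (2 * n + α + β) (n : ℝ) with hS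
  set Sm : ℝ := gbinom (2 * m + α + β) (m : ℝ) with hSm
  set C : ℝ := (2 : ℝ) ^ α * 2 ^ β * ((2 : ℝ) ^ n / S) * ((2 : ℝ) ^ m / Sm) with hC
  -- change of variables
  have hcv := intervalIntegral.integral_comp_mul_add (a := (0:ℝ)) (b := 1) f two_ne_zero (-1)
  have hI : (∫ x in (-1:ℝ)..1, f x) = 2 * ∫ t in (0:ℝ)..1, f (2 * t + -1) := by
    rw [hcv]
    norm_num [smul_eq_mul]
    ring
  rw [hI]
  -- pointwise rewrite on [0,1]
  have heq : Set.EqOn (fun t : ℝ => f (2 * t + -1))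
      (fun t : ℝ => C * ∑ k ∈ Finset.range (m + 1),
        gbinom (m + α) ((m - k : ℕ) : ℝ) * gbinom (m + β) (k : ℝ) * (-1 : ℝ) ^ k *
          (jsum α β n t * ((1 - t) ^ k * t ^ (m - k) * ((1 - t) ^ α * t ^ β))))
      (Set.uIcc 0 1) := by
    intro t ht
    rw [Set.uIcc_of_le (by norm_num : (0:ℝ) ≤ 1)] at ht
    simp only [hf]
    rw [show 2 * t + -1 = 2 * t - 1 by ring]
    rw [jacobi_shift α β n t, jacobi_shift α β m t,
      show (1 : ℝ) - (2 * t - 1) = 2 * (1 - t) by ring,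
      show (1 : ℝ) + (2 * t - 1) = 2 * t by ring,
      Real.mul_rpow (by norm_num) (by linarith [ht.2] : (0:ℝ) ≤ 1 - t),
      Real.mul_rpow (by norm_num) ht.1]
    have h4 : jsum α β m t * (jsum α β n t * ((1 - t) ^ α * t ^ β)) =
        ∑ k ∈ Finset.range (m + 1),
          gbinom (m + α) ((m - k : ℕ) : ℝ) * gbinom (m + β) (k : ℝ) * (-1 : ℝ) ^ k *
            ((1 - t) ^ k * t ^ (m - k) * (jsum α β n t * ((1 - t) ^ α * t ^ β))) :=
      jsum_mul α β m t _
    have h5 : ∀ k ∈ Finset.range (m + 1),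
        gbinom (m + α) ((m - k : ℕ) : ℝ) * gbinom (m + β) (k : ℝ) * (-1 : ℝ) ^ k *
          ((1 - t) ^ k * t ^ (m - k) * (jsum α β n t * ((1 - t) ^ α * t ^ β))) =
        gbinom (m + α) ((m - k : ℕ) : ℝ) * gbinom (m + β) (k : ℝ) * (-1 : ℝ) ^ k *
          (jsum α β n t * ((1 - t) ^ k * t ^ (m - k) * ((1 - t) ^ α * t ^ β))) :=
      fun k _ => by ring
    rw [hC]
    rw [← Finset.sum_congr rfl h5, ← h4]
    ring
  rw [intervalIntegral.integral_congr heq, intervalIntegral.integral_const_mul,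
    intervalIntegral.integral_finset_sum (fun k _ =>
      ((jsum_integrable α β hα hβ n k (m - k)).const_mul _))]
  simp only [intervalIntegral.integral_const_mul]
  have hmom : ∀ k ∈ Finset.range (m + 1),
      gbinom (m + α) ((m - k : ℕ) : ℝ) * gbinom (m + β) (k : ℝ) * (-1 : ℝ) ^ k *
        (∫ t in (0:ℝ)..1, jsum α β n t * ((1 - t) ^ k * t ^ (m - k) * ((1 - t) ^ α * t ^ β))) =
      gbinom (m + α) ((m - k : ℕ) : ℝ) * gbinom (m + β) (k : ℝ) * (-1 : ℝ) ^ k *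
        ((if m = n then (-1 : ℝ) ^ k else 0) *
          (Real.Gamma (n + α + 1) * Real.Gamma (n + β + 1)) /
          Real.Gamma (α + β + n + m + 2)) := by
    intro k hk
    have hk' : k ≤ m := Nat.lt_succ_iff.mp (Finset.mem_range.mp hk)
    have hiff : k + (m - k) = m := Nat.add_sub_cancel' hk'
    rw [moment α β hα hβ n k (m - k) (by omega)]
    rw [show α + β + (n:ℝ) + (k:ℝ) + ((m - k : ℕ) : ℝ) + 2 = α + β + n + m + 2 by
      push_cast [Nat.cast_sub hk']; ring]
    rw [hiff]
  rw [Finset.sum_congr rfl hmom]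
  by_cases hEq : n = m
  · subst hEq
    simp only [eq_self_iff_true, if_true]
    
    have hones : ∀ k ∈ Finset.range (n + 1),
        gbinom (n + α) ((n - k : ℕ) : ℝ) * gbinom (n + β) (k : ℝ) * (-1 : ℝ) ^ k *
          ((-1 : ℝ) ^ k * (Real.Gamma (n + α + 1) * Real.Gamma (n + β + 1)) /
            Real.Gamma (α + β + n + n + 2)) =
        gbinom (n + α) ((n - k : ℕ) : ℝ) * gbinom (n + β) (k : ℝ) *
          ((Real.Gamma (n + α + 1) * Real.Gamma (n + β + 1)) /
            Real.Gamma (α + β + n + n + 2)) := by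
      intro k _
      have : (-1 : ℝ) ^ k * (-1 : ℝ) ^ k = 1 := by
        rw [← mul_pow]; norm_num
      field_simp
      rw [show ((-1:ℝ) ^ k) ^ 2 = 1 by rw [sq]; exact this]
      ring
    rw [Finset.sum_congr rfl hones, ← Finset.sum_mul]
    have hvan := gbinom_vandermonde ((n : ℝ) + α) ((n : ℝ) + β) n
      (by linarith) (by linarith) (by push_cast; linarith)
    rw [show ((n:ℝ) + α) + ((n:ℝ) + β) = 2 * n + α + β by ring] at hvan
    rw [hvan, ← hS]
    -- final arithmetic
    have hSval : S = Real.Gamma (2 * n + α + β + 1) /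
        ((n.factorial : ℝ) * Real.Gamma ((n:ℝ) + α + β + 1)) := by
      rw [hS, gbinom, Real.Gamma_nat_eq_factorial,
        show 2 * (n:ℝ) + α + β - (n:ℝ) + 1 = (n:ℝ) + α + β + 1 by ring]
    have hΓe : 0 < Real.Gamma (2 * (n:ℝ) + α + β + 1) := by
      refine Real.Gamma_pos_of_pos ?_
      have : (0:ℝ) ≤ n := Nat.cast_nonneg n
      linarith
    have hΓc : 0 < Real.Gamma ((n:ℝ) + α + β + 1) := Real.Gamma_pos_of_pos hn
    have hΓa : 0 < Real.Gamma ((n:ℝ) + α + 1) := by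
      refine Real.Gamma_pos_of_pos ?_
      have : (0:ℝ) ≤ n := Nat.cast_nonneg n
      linarith
    have hΓb : 0 < Real.Gamma ((n:ℝ) + β + 1) := by
      refine Real.Gamma_pos_of_pos ?_
      have : (0:ℝ) ≤ n := Nat.cast_nonneg n
      linarith
    have hd : Real.Gamma (α + β + (n:ℝ) + n + 2) =
        (2 * (n:ℝ) + α + β + 1) * Real.Gamma (2 * n + α + β + 1) := by
      rw [show α + β + (n:ℝ) + n + 2 = (2 * (n:ℝ) + α + β + 1) + 1 by ring]
      refine Real.Gamma_add_one ?_
      have : (0:ℝ) ≤ n := Nat.cast_nonneg n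
      intro hc; linarith
    have hpos : (0:ℝ) < 2 * (n:ℝ) + α + β + 1 := by
      have : (0:ℝ) ≤ n := Nat.cast_nonneg n
      linarith
    have hfac : (0:ℝ) < (n.factorial : ℝ) := by positivity
    have hSmS : Sm = S := by rw [hSm, hS]
    have hSpos : (0:ℝ) < S := by rw [hSval]; positivity
    rw [hd, hC, hSmS, hSval]
    rw [show (2:ℝ) ^ (2 * (n:ℝ) + α + β + 1) = 2 ^ (2 * n : ℕ) * 2 ^ α * 2 ^ β * 2 by
      rw [Real.rpow_add two_pos, Real.rpow_add two_pos, Real.rpow_add two_pos, Real.rpow_one,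
        show (2:ℝ) * (n:ℝ) = ((2 * n : ℕ) : ℝ) by push_cast; ring, Real.rpow_natCast]]
    field_simp
    ring
  · have hne : m ≠ n := fun hc => hEq hc.symm
    simp only [if_neg hne, if_neg hEq]
    simp

end AuxJacobi

/-- the orthogonality relation for monic Jacobi polynomials. -/
theorem jacobiP_orthogonality (α β : ℝ) (hα : -1 < α) (hβ : -1 < β) (n m : ℕ)
    (hn : 0 < (n : ℝ) + α + β + 1) (hm : 0 < (m : ℝ) + α + β + 1) :
    ∫ x in (-1:ℝ)..1, jacobiP α β n x * jacobiP α β m x * (1 - x) ^ α * (1 + x) ^ β =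
      if n = m then
        (2 : ℝ) ^ (2 * (n : ℝ) + α + β + 1) *
          (Real.Gamma (n + α + 1) * Real.Gamma (n + β + 1) *
            Real.Gamma (n + α + β + 1) * (Nat.factorial n : ℝ)) /
          ((2 * n + α + β + 1) * (Real.Gamma (2 * n + α + β + 1)) ^ 2)
      else 0 := by
  rcases le_total m n with h | h
  · exact main' α β hα hβ n m h hn
  · have h1 : (∫ x in (-1:ℝ)..1, jacobiP α β n x * jacobiP α β m x * (1 - x) ^ α * (1 + x) ^ β)
        = ∫ x in (-1:ℝ)..1, jacobiP α β m x * jacobiP α β n x * (1 - x) ^ α * (1 + x) ^ β :=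
      intervalIntegral.integral_congr fun x _ => by ring
    rw [h1, main' α β hα hβ m n h hm]
    by_cases hc : n = m
    · rw [if_pos hc.symm, if_pos hc, hc]
    · rw [if_neg (fun hc2 => hc hc2.symm), if_neg hc]
end
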